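/- arXiv:1011.2215 — 5 statements merged into one kernel-verified Lean document; each statement's English description precedes it below -/
import Mathlib

section
/- Let d ≥ 1 be a natural number and let r be a real number with 0 ≤ r ≤ π/4. For 1 ≤ k ≤ d define p_k = C(d−1, k−1) · (cos r)^(2(d−1)) · (tan r)^(2(k−1)) and p̃_k = C(d−1, k−1) · (cos r)^(2(d−1)) · (tan r)^(2(d−k)). Define q₁ = (tan r)^(2(d−1)) and, for 2 ≤ k ≤ d, q_k = C(d−1, k−1) · (cos r)^(2(d−1)) · ((tan r)^(2(d−k)) − (tan r)^(2(d+k−2))). Then: (i) q₁·p₁ = p̃₁ and q₁·p_k + q_k = p̃_k for every 2 ≤ k ≤ d; (ii) q_k ≥ 0 for every 1 ≤ k ≤ d; and (iii) ∑_{k=1}^{d} q_k = 1. -/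
/-!
Write `t = tan² r` and `c = cos² r`, so that `c (1 + t) = 1` and `0 ≤ t ≤ 1`. Then
`p_k = C(d-1,k-1) cⁿ tᵏ⁻¹` and `p̃_k = C(d-1,k-1) cⁿ tⁿ⁻ᵏ⁺¹` (with `n = d - 1`) are the two
orientations of the binomial expansion of `(c (1 + t))ⁿ = 1`, so both sum to one. The identity
`q₁ p_k + q_k = p̃_k` is exponent arithmetic, `q_k ≥ 0` because `t ≤ 1` makes `t^m` decreasing in
`m`, and summing `q₁ p_k + q_k = p̃_k + [k = 1] q₁` over `k` gives `q₁ + ∑ q = 1 + q₁`.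
-/

open Real Finset

theorem Real.tan_le_one_of_le_pi_div_four {x : ℝ} (hx₀ : -(π / 2) < x) (hx : x ≤ π / 4) :
    tan x ≤ 1 := by
  have hπ := pi_pos
  rw [← tan_pi_div_four]
  exact strictMonoOn_tan.monotoneOn ⟨hx₀, by linarith⟩ ⟨by linarith, by linarith⟩ hx

theorem Real.cos_sq_mul_one_add_tan_sq {x : ℝ} (hx : cos x ≠ 0) :
    cos x ^ 2 * (1 + tan x ^ 2) = 1 := by
  rw [← inv_one_add_tan_sq hx, inv_mul_cancel₀ (by positivity)]

theorem Finset.sum_Icc_one_eq_sum_range {M : Type*} [AddCommMonoid M] (f : ℕ → M) (d : ℕ) :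
    ∑ k ∈ Icc 1 d, f k = ∑ i ∈ range d, f (i + 1) := by
  rw [range_eq_Ico, sum_Ico_add', zero_add, Ico_add_one_right_eq_Icc]

section Binomial

variable {R : Type*} [CommSemiring R] {d : ℕ}

theorem Finset.sum_Icc_choose_mul_pow (hd : 1 ≤ d) (x : R) :
    ∑ k ∈ Icc 1 d, ((d - 1).choose (k - 1) : R) * x ^ (k - 1) = (1 + x) ^ (d - 1) := by
  obtain ⟨n, rfl⟩ := Nat.exists_eq_add_of_le' hd
  rw [sum_Icc_one_eq_sum_range, add_comm (1 : R), add_pow]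
  simp [mul_comm]

theorem Finset.sum_Icc_choose_mul_pow_sub (hd : 1 ≤ d) (x : R) :
    ∑ k ∈ Icc 1 d, ((d - 1).choose (k - 1) : R) * x ^ (d - k) = (1 + x) ^ (d - 1) := by
  obtain ⟨n, rfl⟩ := Nat.exists_eq_add_of_le' hd
  rw [sum_Icc_one_eq_sum_range, add_pow]
  simp [mul_comm]

end Binomial

theorem Finset.sum_Icc_eq_one_of_mul_add_eq {R : Type*} [CommRing R] {d : ℕ} (hd : 1 ≤ d)
    {p pt q : ℕ → R} (hp : ∑ k ∈ Icc 1 d, p k = 1) (hpt : ∑ k ∈ Icc 1 d, pt k = 1)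
    (h₁ : q 1 * p 1 = pt 1) (hk : ∀ k, 2 ≤ k → k ≤ d → q 1 * p k + q k = pt k) :
    ∑ k ∈ Icc 1 d, q k = 1 := by
  have hterm : ∀ k ∈ Icc 1 d, q 1 * p k + q k = pt k + if k = 1 then q 1 else 0 := by
    intro k hkd
    rcases eq_or_ne k 1 with rfl | hk1
    · simp [h₁]
    · simp [hk1, hk k (by grind) (mem_Icc.1 hkd).2]
  have hsum := sum_congr rfl hterm
  rw [sum_add_distrib, sum_add_distrib, ← mul_sum, hp, hpt, sum_ite_eq',
    if_pos (mem_Icc.2 ⟨le_rfl, hd⟩)] at hsum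
  linear_combination hsum

/-- Degradability of the Grassmann channels: the coefficients `q k` of the
degrading map are nonnegative, sum to one, and relate the channel block
weights `p k` to the complementary block weights `p̃ k`. -/
theorem grassmann_degrading_map_coefficients
    (d : ℕ) (hd : 1 ≤ d) (r : ℝ) (hr0 : 0 ≤ r) (hr1 : r ≤ Real.pi / 4) :
    let p : ℕ → ℝ := fun k =>
      ((d - 1).choose (k - 1) : ℝ) * Real.cos r ^ (2 * (d - 1)) *
        Real.tan r ^ (2 * (k - 1))
    let pt : ℕ → ℝ := fun k =>
      ((d - 1).choose (k - 1) : ℝ) * Real.cos r ^ (2 * (d - 1)) *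
        Real.tan r ^ (2 * (d - k))
    let q : ℕ → ℝ := fun k =>
      if k = 1 then Real.tan r ^ (2 * (d - 1))
      else ((d - 1).choose (k - 1) : ℝ) * Real.cos r ^ (2 * (d - 1)) *
        (Real.tan r ^ (2 * (d - k)) - Real.tan r ^ (2 * (d + k - 2)))
    (q 1 * p 1 = pt 1 ∧ ∀ k, 2 ≤ k → k ≤ d → q 1 * p k + q k = pt k) ∧
    (∀ k, 1 ≤ k → k ≤ d → 0 ≤ q k) ∧
    (∑ k ∈ Finset.Icc 1 d, q k = 1) := by
  intro p pt q
  have hπ := pi_pos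
  have hcos : 0 < cos r := cos_pos_of_mem_Ioo ⟨by linarith, by linarith⟩
  have htan₀ : 0 ≤ tan r := tan_nonneg_of_nonneg_of_le_pi_div_two hr0 (by linarith)
  have htan₁ : tan r ≤ 1 := tan_le_one_of_le_pi_div_four (by linarith) hr1
  have hnorm : (cos r ^ 2) ^ (d - 1) * (1 + tan r ^ 2) ^ (d - 1) = 1 := by
    rw [← mul_pow, cos_sq_mul_one_add_tan_sq hcos.ne', one_pow]
  have h₁ : q 1 * p 1 = pt 1 := by simp [p, pt, q, mul_comm]
  have hk : ∀ k, 2 ≤ k → k ≤ d → q 1 * p k + q k = pt k := by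
    intro k hk2 hkd
    have hexp : tan r ^ (2 * (d - 1)) * tan r ^ (2 * (k - 1)) = tan r ^ (2 * (d + k - 2)) := by
      rw [← pow_add]; congr 1; omega
    simp only [p, pt, q, if_pos, if_neg (show k ≠ 1 by omega)]
    linear_combination ((d - 1).choose (k - 1) : ℝ) * cos r ^ (2 * (d - 1)) * hexp
  have hp : ∑ k ∈ Icc 1 d, p k = 1 := by
    rw [← hnorm, ← sum_Icc_choose_mul_pow hd, mul_sum]
    exact sum_congr rfl fun k _ => by simp only [p, pow_mul]; ring
  have hpt : ∑ k ∈ Icc 1 d, pt k = 1 := by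
    rw [← hnorm, ← sum_Icc_choose_mul_pow_sub hd, mul_sum]
    exact sum_congr rfl fun k _ => by simp only [pt, pow_mul]; ring
  refine ⟨⟨h₁, hk⟩, fun k _ hkd => ?_, sum_Icc_eq_one_of_mul_add_eq hd hp hpt h₁ hk⟩
  rcases eq_or_ne k 1 with rfl | hk1
  · simp only [q, if_pos]
    positivity
  · simp only [q, if_neg hk1]
    have hgap := sub_nonneg.2 (pow_le_pow_of_le_one htan₀ htan₁
      (show 2 * (d - k) ≤ 2 * (d + k - 2) by omega))
    positivity
end

section
/- For every natural number d ≥ 1 and every real number w, the following identity holds: (1/d) · ∑_{k=1}^{d} (w^(d−k) − w^(k−1)) · k · C(d, k) · ln k = ∑_{k=0}^{d−1} w^k · C(d−1, k) · ln((d−k)/(k+1)). -/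
open Real Finset

/-- Algebraic simplification of the quantum capacity of the Grassmann
channel, as a polynomial identity in `w = tan² r`. -/
theorem grassmann_capacity_simplification
    (d : ℕ) (hd : 1 ≤ d) (w : ℝ) :
    (1 / (d : ℝ)) * ∑ k ∈ Finset.Icc 1 d,
        (w ^ (d - k) - w ^ (k - 1)) * (k : ℝ) * (d.choose k : ℝ) *
          Real.log (k : ℝ)
    = ∑ k ∈ Finset.range d,
        w ^ k * ((d - 1).choose k : ℝ) *
          Real.log (((d : ℝ) - k) / ((k : ℝ) + 1)) := by
  have hd0 : (d : ℝ) ≠ 0 := Nat.cast_ne_zero.mpr (by omega)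
  have step1 : ∑ k ∈ Finset.Icc 1 d,
      (w ^ (d - k) - w ^ (k - 1)) * (k : ℝ) * (d.choose k : ℝ) * Real.log (k : ℝ)
      = ∑ i ∈ Finset.range d, (d : ℝ) *
          (w ^ (d - 1 - i) * ((d - 1).choose i : ℝ) * Real.log ((i : ℝ) + 1)
           - w ^ i * ((d - 1).choose i : ℝ) * Real.log ((i : ℝ) + 1)) := by
    rw [← Finset.Ico_add_one_right_eq_Icc, Finset.sum_Ico_eq_sum_range]
    have hD : d + 1 - 1 = d := by omega
    rw [hD]
    refine Finset.sum_congr rfl fun i hi => ?_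
    have hi' : i < d := Finset.mem_range.mp hi
    have h1 : d - (1 + i) = d - 1 - i := by omega
    have h2 : (1 + i) - 1 = i := by omega
    have h3 : (1 + i) * d.choose (1 + i) = d * (d - 1).choose i := by
      have h := Nat.add_one_mul_choose_eq (d - 1) i
      simp only [Nat.succ_eq_add_one, (by omega : d - 1 + 1 = d)] at h
      rw [Nat.add_comm 1 i, h, Nat.mul_comm]
    have h3r : ((1 + i : ℕ) : ℝ) * ((d.choose (1 + i) : ℕ) : ℝ)
        = (d : ℝ) * (((d - 1).choose i : ℕ) : ℝ) := by exact_mod_cast h3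
    rw [h1, h2]
    push_cast at h3r ⊢
    have hc : (1 : ℝ) + (i : ℝ) = (i : ℝ) + 1 := add_comm _ _
    rw [hc] at h3r ⊢
    linear_combination (w ^ (d - 1 - i) - w ^ i) * Real.log ((i : ℝ) + 1) * h3r
  rw [step1, ← Finset.mul_sum, ← mul_assoc, one_div, inv_mul_cancel₀ hd0, one_mul,
    Finset.sum_sub_distrib]
  have hrefl := Finset.sum_range_reflect
    (fun j => w ^ (d - 1 - j) * ((d - 1).choose j : ℝ) * Real.log ((j : ℝ) + 1)) d
  have reflL : ∑ j ∈ Finset.range d,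
      w ^ (d - 1 - (d - 1 - j)) * ((d - 1).choose (d - 1 - j) : ℝ)
        * Real.log (((d - 1 - j : ℕ) : ℝ) + 1)
      = ∑ j ∈ Finset.range d,
      w ^ j * ((d - 1).choose j : ℝ) * Real.log ((d : ℝ) - (j : ℝ)) := by
    refine Finset.sum_congr rfl fun j hj => ?_
    have hj' : j < d := Finset.mem_range.mp hj
    have e1 : d - 1 - (d - 1 - j) = j := by omega
    have e2 : (d - 1).choose (d - 1 - j) = (d - 1).choose j :=
      Nat.choose_symm (by omega : j ≤ d - 1)
    have e3 : ((d - 1 - j : ℕ) : ℝ) + 1 = (d : ℝ) - (j : ℝ) := by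
      have : ((d - 1 - j : ℕ) : ℝ) = (d : ℝ) - 1 - (j : ℝ) := by
        push_cast [Nat.cast_sub (by omega : j ≤ d - 1), Nat.cast_sub hd]; ring
      rw [this]; ring
    rw [e1, e3, ← e2]
  rw [reflL] at hrefl
  rw [← hrefl, ← Finset.sum_sub_distrib]
  refine Finset.sum_congr rfl fun k hk => ?_
  have hk' : k < d := Finset.mem_range.mp hk
  have hpos : (0 : ℝ) < (d : ℝ) - (k : ℝ) := by
    have : (k : ℝ) < (d : ℝ) := by exact_mod_cast hk'
    linarith
  rw [Real.log_div (ne_of_gt hpos) (by positivity)]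
  ring
end

section
/- Let d ≥ 2 be a natural number and let z be a real number with 0 < z < 1. Define Q(z) = ((1−z)^(d+1)/d) · ∑_{k=1}^{∞} z^(k−1) · k · C(d+k−1, k) · ln((d+k−1)/k) and Q'(z) = ((d−1)/d) · ((1−z)/z) · (1 − (1−z)^d). Then |Q(z) − Q'(z)| ≤ ((d−1)·(1−z)^(d+1)/d) · C(2d−1, d) + ((d−1)²·(2d−1)·(1−z)²) / (2·d²·z). In particular, |Q(z) − Q'(z)| approaches zero at a rate O((1−z)²) as z → 1 from the left. -/
/-!
Replacing `log (1 + x_k)` by `x_k = (d - 1) / (k + 1)` in the series for `Q` produces `Q'`,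
because `∑ C(d+k, k+1) z^k = ((1 - z)^{-d} - 1) / z`. Hence `Q' - Q` is `(1 - z)^{d+1} / d`
times a series of nonnegative terms `C(d+k, k+1) z^k (k + 1) (x_k - log (1 + x_k))`.
The first `d - 1` of them are bounded through `x - log (1 + x) ≤ x` and the hockey-stick
identity, giving the `C(2d-1, d)` term. For `k ≥ d - 1` we use `x - log (1 + x) ≤ x² / 2` and
`C(d+k, k+1) / (k + 1) ≤ 2 (2d - 1) / d² · C(k+d-2, d-2)`; the generating function of the
latter is `(1 - z)^{-(d-1)}`, two powers of `1 - z` short of the prefactor.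
-/

open Real Finset

theorem Real.sub_log_one_add_le_sq_div_two {x : ℝ} (hx : 0 ≤ x) :
    x - log (1 + x) ≤ x ^ 2 / 2 := by
  have hlog := le_log_one_add_of_nonneg hx
  have hsub : x - 2 * x / (x + 2) = x ^ 2 / (x + 2) := by field_simp; ring
  have hle : x ^ 2 / (x + 2) ≤ x ^ 2 / 2 :=
    div_le_div_of_nonneg_left (sq_nonneg x) two_pos (by linarith)
  linarith

theorem Nat.add_one_mul_add_one_mul_choose_eq (e k : ℕ) :
    (e + 1) * (k + 1) * (e + k + 2).choose (k + 1) =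
      (e + k + 2) * (e + k + 1) * (e + k).choose e := by
  have h₁ := Nat.add_one_mul_choose_eq (e + k + 1) e
  have h₂ := Nat.add_one_mul_choose_eq (e + k) k
  rw [Nat.choose_symm_of_eq_add (show e + k + 1 = (k + 1) + e by omega),
    ← Nat.choose_symm_add] at h₂
  rw [Nat.choose_symm_of_eq_add (show e + k + 2 = (k + 1) + (e + 1) by omega)]
  calc (e + 1) * (k + 1) * (e + k + 2).choose (e + 1)
      = (k + 1) * ((e + k + 1 + 1).choose (e + 1) * (e + 1)) := by ring
    _ = (e + k + 2) * ((e + k + 1).choose e * (k + 1)) := by rw [← h₁]; ring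
    _ = (e + k + 2) * (e + k + 1) * (e + k).choose e := by rw [← h₂]; ring

theorem Nat.sum_range_choose_add_one_le (d : ℕ) :
    ∑ k ∈ range (d - 1), (d + k).choose (k + 1) ≤ (2 * d - 1).choose d := by
  obtain _ | n := d
  · simp
  have h := Nat.sum_range_add_choose n n
  rw [sum_range_succ'] at h
  calc ∑ k ∈ range (n + 1 - 1), (n + 1 + k).choose (k + 1)
      = ∑ k ∈ range n, (k + 1 + n).choose n := by
        refine sum_congr (by simp) fun k _ => ?_
        rw [show n + 1 + k = (k + 1) + n by omega, Nat.choose_symm_add]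
    _ ≤ (2 * (n + 1) - 1).choose (n + 1) := by
        rw [show 2 * (n + 1) - 1 = n + n + 1 by omega]; omega

theorem hasSum_choose_add_one_mul_pow {𝕜 : Type*} [NormedField 𝕜] [CompleteSpace 𝕜]
    {d : ℕ} (hd : 1 ≤ d) {z : 𝕜} (hz0 : z ≠ 0) (hz : ‖z‖ < 1) :
    HasSum (fun k : ℕ => ((d + k).choose (k + 1) : 𝕜) * z ^ k)
      ((1 / (1 - z) ^ d - 1) / z) := by
  obtain ⟨n, rfl⟩ : ∃ n, d = n + 1 := ⟨d - 1, by omega⟩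
  have h := hasSum_choose_mul_geometric_of_norm_lt_one n hz
  rw [← hasSum_nat_add_iff' 1] at h
  have hterm (k : ℕ) : ((n + 1 + k).choose (k + 1) : 𝕜) * z ^ k =
      (k + 1 + n).choose n * z ^ (k + 1) / z := by
    rw [show n + 1 + k = k + 1 + n by omega, Nat.choose_symm_add, pow_succ]
    field_simp
  simpa [hterm] using h.div_const z

theorem choose_add_one_div_le (d : ℕ) (hd : 2 ≤ d) {k : ℕ} (hk : d ≤ k + 1) :
    ((d + k).choose (k + 1) : ℝ) / (k + 1) ≤
      2 * (2 * d - 1) / d ^ 2 * ((k + (d - 2)).choose (d - 2) : ℝ) := by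
  obtain ⟨e, rfl⟩ : ∃ e, d = e + 2 := ⟨d - 2, by omega⟩
  have hchoose : ((e : ℝ) + 1) * (k + 1) * (e + 2 + k).choose (k + 1) =
      (e + k + 2) * (e + k + 1) * (k + e).choose e := by
    rw [add_right_comm e 2 k, add_comm k e]
    exact_mod_cast Nat.add_one_mul_add_one_mul_choose_eq e k
  have hratio : ((e : ℝ) + k + 2) * (e + k + 1) * (e + 2) ^ 2 ≤
      2 * (e + 1) * (2 * e + 3) * (k + 1) ^ 2 := by
    have hek : (e : ℝ) + 1 ≤ k := by exact_mod_cast (by omega : e + 1 ≤ k)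
    have he : (0 : ℝ) ≤ e := e.cast_nonneg
    nlinarith [mul_nonneg he (sub_nonneg.2 hek), mul_nonneg (mul_nonneg he he) (sub_nonneg.2 hek)]
  simp only [Nat.add_sub_cancel, Nat.cast_add, Nat.cast_ofNat]
  calc ((e + 2 + k).choose (k + 1) : ℝ) / (k + 1)
      = (k + e).choose e * ((e + k + 2) * (e + k + 1) * (e + 2) ^ 2) /
          ((e + 1) * (k + 1) ^ 2 * (e + 2) ^ 2) := by
        field_simp
        linear_combination hchoose
    _ ≤ (k + e).choose e * (2 * (e + 1) * (2 * e + 3) * (k + 1) ^ 2) /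
          ((e + 1) * (k + 1) ^ 2 * (e + 2) ^ 2) := by gcongr
    _ = 2 * (2 * ((e : ℝ) + 2) - 1) / (e + 2) ^ 2 * (k + e).choose e := by
        field_simp; ring

noncomputable def linearizationGap (d : ℕ) (z : ℝ) (k : ℕ) : ℝ :=
  ((d + k).choose (k + 1) : ℝ) * z ^ k * (k + 1) *
    (((d : ℝ) - 1) / (k + 1) - log (1 + ((d : ℝ) - 1) / (k + 1)))

section linearizationGap

variable {d : ℕ} {z : ℝ}

theorem linearizationGap_eq (d : ℕ) (z : ℝ) (k : ℕ) :
    linearizationGap d z k = ((d : ℝ) - 1) * ((d + k).choose (k + 1) * z ^ k) -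
      z ^ k * ((k : ℝ) + 1) * (d + k).choose (k + 1) * log (((d : ℝ) + k) / (k + 1)) := by
  have hk : (k : ℝ) + 1 ≠ 0 := by positivity
  rw [linearizationGap, show ((d : ℝ) + k) / (k + 1) = 1 + ((d : ℝ) - 1) / (k + 1) by
    field_simp; ring]
  field_simp

theorem sub_one_div_add_one_nonneg (hd : 1 ≤ d) (k : ℕ) : 0 ≤ ((d : ℝ) - 1) / (k + 1) :=
  div_nonneg (sub_nonneg.2 (by exact_mod_cast hd)) (by positivity)

theorem linearizationGap_nonneg (hd : 1 ≤ d) (hz : 0 ≤ z) (k : ℕ) :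
    0 ≤ linearizationGap d z k := by
  have hx := sub_one_div_add_one_nonneg hd k
  have hlog := log_le_sub_one_of_pos (x := 1 + ((d : ℝ) - 1) / (k + 1)) (by linarith)
  have : 0 ≤ ((d : ℝ) - 1) / (k + 1) - log (1 + ((d : ℝ) - 1) / (k + 1)) := by linarith
  unfold linearizationGap
  positivity

theorem linearizationGap_le (hd : 1 ≤ d) (hz : 0 ≤ z) (k : ℕ) :
    linearizationGap d z k ≤ ((d : ℝ) - 1) * ((d + k).choose (k + 1) * z ^ k) := by
  have hlog : 0 ≤ log (1 + ((d : ℝ) - 1) / (k + 1)) :=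
    log_nonneg (by linarith [sub_one_div_add_one_nonneg hd k])
  calc linearizationGap d z k
      ≤ ((d + k).choose (k + 1) : ℝ) * z ^ k * (k + 1) * (((d : ℝ) - 1) / (k + 1)) := by
        unfold linearizationGap; gcongr; linarith
    _ = ((d : ℝ) - 1) * ((d + k).choose (k + 1) * z ^ k) := by field_simp

theorem linearizationGap_le_sq (hd : 1 ≤ d) (hz : 0 ≤ z) (k : ℕ) :
    linearizationGap d z k ≤
      ((d : ℝ) - 1) ^ 2 / 2 * ((d + k).choose (k + 1) / (k + 1)) * z ^ k := by
  calc linearizationGap d z k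
      ≤ ((d + k).choose (k + 1) : ℝ) * z ^ k * (k + 1) *
          ((((d : ℝ) - 1) / (k + 1)) ^ 2 / 2) := by
        unfold linearizationGap; gcongr
        exact sub_log_one_add_le_sq_div_two (sub_one_div_add_one_nonneg hd k)
    _ = _ := by field_simp

theorem summable_linearizationGap (hd : 1 ≤ d) (hz0 : 0 < z) (hz1 : z < 1) :
    Summable (linearizationGap d z) := by
  have hz : ‖z‖ < 1 := by rwa [Real.norm_of_nonneg hz0.le]
  refine Summable.of_nonneg_of_le (linearizationGap_nonneg hd hz0.le)
    (linearizationGap_le hd hz0.le) ?_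
  exact ((hasSum_choose_add_one_mul_pow hd hz0.ne' hz).mul_left _).summable

theorem tsum_mul_log_eq_sub_tsum_linearizationGap (hd : 1 ≤ d) (hz0 : 0 < z) (hz1 : z < 1) :
    ∑' k : ℕ, z ^ k * ((k : ℝ) + 1) * ((d + k).choose (k + 1) : ℝ) *
        log (((d : ℝ) + k) / ((k : ℝ) + 1)) =
      ((d : ℝ) - 1) * ((1 / (1 - z) ^ d - 1) / z) - ∑' k, linearizationGap d z k := by
  have hz : ‖z‖ < 1 := by rwa [Real.norm_of_nonneg hz0.le]
  have hlin := (hasSum_choose_add_one_mul_pow hd hz0.ne' hz).mul_left ((d : ℝ) - 1)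
  rw [← (hlin.sub (summable_linearizationGap hd hz0 hz1).hasSum).tsum_eq]
  exact tsum_congr fun k => by rw [linearizationGap_eq]; ring

theorem sum_range_linearizationGap_le (hd : 1 ≤ d) (hz0 : 0 ≤ z) (hz1 : z ≤ 1) :
    ∑ k ∈ range (d - 1), linearizationGap d z k ≤
      ((d : ℝ) - 1) * ((2 * d - 1).choose d : ℝ) := by
  have hd' : (0 : ℝ) ≤ d - 1 := sub_nonneg.2 (by exact_mod_cast hd)
  calc ∑ k ∈ range (d - 1), linearizationGap d z k
      ≤ ∑ k ∈ range (d - 1), ((d : ℝ) - 1) * (d + k).choose (k + 1) := by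
        refine sum_le_sum fun k _ => (linearizationGap_le hd hz0 k).trans ?_
        exact mul_le_mul_of_nonneg_left
          (mul_le_of_le_one_right (Nat.cast_nonneg _) (pow_le_one₀ hz0 hz1)) hd'
    _ = ((d : ℝ) - 1) * ((∑ k ∈ range (d - 1), (d + k).choose (k + 1) : ℕ) : ℝ) := by
        rw [Nat.cast_sum, mul_sum]
    _ ≤ ((d : ℝ) - 1) * ((2 * d - 1).choose d : ℝ) :=
        mul_le_mul_of_nonneg_left (by exact_mod_cast Nat.sum_range_choose_add_one_le d) hd'

theorem tsum_linearizationGap_nat_add_le (hd : 2 ≤ d) (hz0 : 0 < z) (hz1 : z < 1) :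
    ∑' k, linearizationGap d z (k + (d - 1)) ≤
      ((d : ℝ) - 1) ^ 2 * (2 * d - 1) / d ^ 2 / (1 - z) ^ (d - 1) := by
  have hz : ‖z‖ < 1 := by rwa [Real.norm_of_nonneg hz0.le]
  set K : ℝ := ((d : ℝ) - 1) ^ 2 * (2 * d - 1) / d ^ 2
  have hK : 0 ≤ K := by
    have : (2 : ℝ) ≤ d := by exact_mod_cast hd
    exact div_nonneg (mul_nonneg (sq_nonneg _) (by linarith)) (by positivity)
  set b : ℕ → ℝ := fun k => ((k + (d - 2)).choose (d - 2) : ℝ) * z ^ k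
  have hb : HasSum b (1 / (1 - z) ^ (d - 1)) := by
    have := hasSum_choose_mul_geometric_of_norm_lt_one (d - 2) hz
    rwa [show d - 2 + 1 = d - 1 by omega] at this
  have hshift : Function.Injective (· + (d - 1)) := add_left_injective _
  have hterm (k : ℕ) : linearizationGap d z (k + (d - 1)) ≤ K * b (k + (d - 1)) :=
    calc linearizationGap d z (k + (d - 1))
        ≤ ((d : ℝ) - 1) ^ 2 / 2 * ((d + (k + (d - 1))).choose (k + (d - 1) + 1) /
            ((k + (d - 1) : ℕ) + 1)) * z ^ (k + (d - 1)) :=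
          linearizationGap_le_sq (by omega) hz0.le _
      _ ≤ ((d : ℝ) - 1) ^ 2 / 2 * (2 * (2 * d - 1) / d ^ 2 *
            ((k + (d - 1) + (d - 2)).choose (d - 2) : ℝ)) * z ^ (k + (d - 1)) := by
          gcongr; exact choose_add_one_div_le d hd (by omega)
      _ = K * b (k + (d - 1)) := by ring
  calc ∑' k, linearizationGap d z (k + (d - 1))
      ≤ ∑' k, K * b (k + (d - 1)) :=
        Summable.tsum_le_tsum hterm
          ((summable_nat_add_iff (d - 1)).2 (summable_linearizationGap (by omega) hz0 hz1))
          ((hb.summable.comp_injective hshift).mul_left K)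
    _ = K * ∑' k, b (k + (d - 1)) := tsum_mul_left
    _ ≤ K * ∑' k, b k :=
        mul_le_mul_of_nonneg_left
          (tsum_comp_le_tsum_of_inj hb.summable (fun k => by positivity) hshift) hK
    _ = K / (1 - z) ^ (d - 1) := by rw [hb.tsum_eq]; ring

theorem tsum_linearizationGap_le (hd : 2 ≤ d) (hz0 : 0 < z) (hz1 : z < 1) :
    ∑' k, linearizationGap d z k ≤ ((d : ℝ) - 1) * ((2 * d - 1).choose d : ℝ) +
      ((d : ℝ) - 1) ^ 2 * (2 * d - 1) / d ^ 2 / (1 - z) ^ (d - 1) := by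
  rw [← (summable_linearizationGap (by omega) hz0 hz1).sum_add_tsum_nat_add (d - 1)]
  exact add_le_add (sum_range_linearizationGap_le (by omega) hz0.le hz1.le)
    (tsum_linearizationGap_nat_add_le hd hz0 hz1)

end linearizationGap

/-- The series is indexed by `k ↦ k + 1`. -/
theorem grassmann_unruh_capacity_approximation_bound
    (d : ℕ) (hd : 2 ≤ d) (z : ℝ) (hz : 0 < z) (hz1 : z < 1) :
    let Q : ℝ := ((1 - z) ^ (d + 1) / (d : ℝ)) *
      ∑' k : ℕ, z ^ k * ((k : ℝ) + 1) * ((d + k).choose (k + 1) : ℝ) *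
        Real.log (((d : ℝ) + k) / ((k : ℝ) + 1))
    let Q' : ℝ := (((d : ℝ) - 1) / d) * ((1 - z) / z) * (1 - (1 - z) ^ d)
    |Q - Q'| ≤ (((d : ℝ) - 1) * (1 - z) ^ (d + 1) / d) *
        ((2 * d - 1).choose d : ℝ)
      + (((d : ℝ) - 1) ^ 2 * (2 * (d : ℝ) - 1) * (1 - z) ^ 2) /
          (2 * (d : ℝ) ^ 2 * z) := by
  intro Q Q'
  have hd1 : 1 ≤ d := by omega
  have hd' : (2 : ℝ) ≤ d := by exact_mod_cast hd
  have hw : 0 < 1 - z := by linarith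
  set S := ∑' k, linearizationGap d z k
  have hgap : Q' - Q = (1 - z) ^ (d + 1) / d * S := by
    simp only [Q, Q', tsum_mul_log_eq_sub_tsum_linearizationGap hd1 hz hz1]
    rw [pow_succ]
    field_simp
    ring
  have hS : 0 ≤ S := tsum_nonneg (linearizationGap_nonneg hd1 hz.le)
  have hpow : (1 - z) ^ (d + 1) = (1 - z) ^ (d - 1) * (1 - z) ^ 2 := by
    rw [← pow_add]; congr 1; omega
  have hnum : 0 ≤ ((d : ℝ) - 1) ^ 2 * (2 * d - 1) * (1 - z) ^ 2 :=
    mul_nonneg (mul_nonneg (sq_nonneg _) (by linarith)) (sq_nonneg _)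
  rw [abs_sub_comm, hgap, abs_of_nonneg (by positivity)]
  calc (1 - z) ^ (d + 1) / d * S
      ≤ (1 - z) ^ (d + 1) / d * (((d : ℝ) - 1) * ((2 * d - 1).choose d : ℝ) +
          ((d : ℝ) - 1) ^ 2 * (2 * d - 1) / d ^ 2 / (1 - z) ^ (d - 1)) :=
        mul_le_mul_of_nonneg_left (tsum_linearizationGap_le hd hz hz1) (by positivity)
    _ = ((d : ℝ) - 1) * (1 - z) ^ (d + 1) / d * ((2 * d - 1).choose d : ℝ) +
          ((d : ℝ) - 1) ^ 2 * (2 * d - 1) * (1 - z) ^ 2 / d ^ 3 := by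
        rw [hpow]; field_simp
    _ ≤ _ := by
        gcongr
        nlinarith
end

section
/- Let d ≥ 2 be a natural number. For a real number z with 0 < z < 1, define Q_G(z) = (1/(1+z)^(d−1)) · ∑_{k=0}^{d−1} z^k · C(d−1, k) · ln((d−k)/(k+1)) and Q_U(z) = ((1−z)^(d+1)/d) · ∑_{k=1}^{∞} z^(k−1) · k · C(d+k−1, k) · ln((d+k−1)/k). Then, as z tends to 1 from the left, the ratio Q_G(z)/Q_U(z) converges to (d/(d−1)) · 2^(1−d) · ∑_{k=0}^{⌊(d−1)/2⌋} (d−1−2k) · C(d−1, k) · ln((d−k)/(k+1)). -/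
/-!
The Grassmann sum `N(z) = ∑ z^k c_k` has antisymmetric coefficients, `c_{d-1-k} = -c_k`, so
`N(1) = 0` and `Q_G(z) ~ N'(1) (z - 1) / 2^(d-1)`; pairing `k` with `d - 1 - k` turns
`N'(1) = ∑ k c_k` into minus the half sum of the limit. The Unruh coefficients are asymptotic to
`d - 1` times the coefficients `C(k+d-1, d-1)` of `(1 - z)^(-d)`, and since this series diverges
at `z = 1` an Abelian argument gives `Q_U(z) ~ (d - 1)(1 - z)/d`. The zeros `z - 1` and `1 - z`
cancel in the ratio.
-/

open Real Finset Filter Topology Asymptotics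

section Reflection

variable {K : Type*} [Field K] [CharZero K] {f : ℕ → K} {n : ℕ}

theorem sum_range_eq_zero_of_reflect_eq_neg (hf : ∀ k < n, f (n - 1 - k) = -f k) :
    ∑ k ∈ range n, f k = 0 := by
  have h := sum_range_reflect f n
  rw [sum_congr rfl fun k hk => hf k (mem_range.1 hk), sum_neg_distrib, neg_eq_iff_add_eq_zero,
    ← two_mul] at h
  simpa using h

theorem sum_range_natCast_mul_of_reflect_eq_neg (hn : 0 < n)
    (hf : ∀ k < n, f (n - 1 - k) = -f k) :
    ∑ k ∈ range n, (k : K) * f k =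
      -∑ k ∈ range ((n - 1) / 2 + 1), ((n : K) - 1 - 2 * k) * f k := by
  set m := (n - 1) / 2 + 1
  have htail : ∑ j ∈ range (n - m), ((m + j : ℕ) : K) * f (m + j) =
      -∑ j ∈ range m, ((n : K) - 1 - j) * f j := by
    rw [← sum_range_reflect]
    have hreflect : ∀ j ∈ range (n - m),
        ((m + (n - m - 1 - j) : ℕ) : K) * f (m + (n - m - 1 - j)) =
          -(((n : K) - 1 - j) * f j) := by
      intro j hj
      have hj := mem_range.1 hj
      rw [show m + (n - m - 1 - j) = n - 1 - j by omega, hf j (by omega),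
        Nat.cast_sub (by omega), Nat.cast_sub hn, Nat.cast_one, mul_neg]
    rw [sum_congr rfl hreflect, sum_neg_distrib, neg_inj]
    rcases (by omega : n - m = m ∨ n - m + 1 = m) with h | h
    · rw [h]
    · have hmid : f (n - m) = 0 := by
        have := hf (n - m) (by omega)
        rwa [show n - 1 - (n - m) = n - m by omega, self_eq_neg] at this
      rw [show range m = range (n - m + 1) by rw [h], sum_range_succ, hmid, mul_zero, add_zero]
  calc ∑ k ∈ range n, (k : K) * f k
      = ∑ k ∈ range m, (k : K) * f k +
          ∑ j ∈ range (n - m), ((m + j : ℕ) : K) * f (m + j) := by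
        rw [← sum_range_add (fun k => (k : K) * f k), Nat.add_sub_cancel' (by omega)]
    _ = -∑ k ∈ range m, ((n : K) - 1 - 2 * k) * f k := by
        rw [htail, ← sub_eq_add_neg, ← sum_sub_distrib, ← sum_neg_distrib]
        exact sum_congr rfl fun k _ => by ring

end Reflection

theorem tendsto_sum_pow_mul_div_sub_one {𝕜 : Type*} [NontriviallyNormedField 𝕜]
    {c : ℕ → 𝕜} {n : ℕ} (hc : ∑ k ∈ range n, c k = 0) :
    Tendsto (fun z => (∑ k ∈ range n, z ^ k * c k) / (z - 1)) (𝓝[≠] 1)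
      (𝓝 (∑ k ∈ range n, (k : 𝕜) * c k)) := by
  have hderiv : HasDerivAt (fun z => ∑ k ∈ range n, z ^ k * c k)
      (∑ k ∈ range n, (k : 𝕜) * c k) 1 := by
    simpa using HasDerivAt.fun_sum (u := range n) fun k _ =>
      (hasDerivAt_pow k (1 : 𝕜)).mul_const (c k)
  refine (hasDerivAt_iff_tendsto_slope.1 hderiv).congr fun z => ?_
  simp [slope_def_field, hc, div_eq_mul_inv]

theorem isLittleO_tsum_mul_pow {e b : ℕ → ℝ} (hb : ∀ k, 0 ≤ b k) (heb : e =o[atTop] b)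
    (hbs : ∀ z ∈ Set.Ioo (0 : ℝ) 1, Summable fun k => b k * z ^ k)
    (hB : Tendsto (fun z => ∑' k, b k * z ^ k) (𝓝[Set.Ioo 0 1] 1) atTop) :
    (fun z => ∑' k, e k * z ^ k) =o[𝓝[Set.Ioo 0 1] 1] fun z => ∑' k, b k * z ^ k := by
  refine isLittleO_iff.2 fun c hc => ?_
  obtain ⟨N, hN⟩ := eventually_atTop.1 (isLittleO_iff.1 heb (half_pos hc))
  set C := ∑ k ∈ range N, |e k|
  filter_upwards [hB.eventually_ge_atTop (2 * C / c), self_mem_nhdsWithin] with z hzB ⟨hz0, hz1⟩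
  have hpow : ∀ k, z ^ k ≤ 1 := fun k => pow_le_one₀ hz0.le hz1.le
  -- The first `N` terms are bounded uniformly in `z`; the tail is at most `c/2` times the
  -- comparison series, which eventually also dominates the head.
  have hbound : ∀ k,
      ‖e k * z ^ k‖ ≤ (if k < N then |e k| else 0) + c / 2 * (b k * z ^ k) := by
    intro k
    rw [norm_mul, norm_pow, Real.norm_of_nonneg hz0.le, Real.norm_eq_abs]
    split_ifs with hk
    · have := mul_le_of_le_one_right (abs_nonneg (e k)) (hpow k)
      have : 0 ≤ c / 2 * (b k * z ^ k) := by have := hb k; positivity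
      linarith
    · have := hN k (not_lt.1 hk)
      rw [Real.norm_eq_abs, Real.norm_of_nonneg (hb k)] at this
      rw [zero_add, ← mul_assoc]
      exact mul_le_mul_of_nonneg_right this (by positivity)
  have hfin : HasSum (fun k => if k < N then |e k| else 0) C := by
    have : HasSum (fun k => if k < N then |e k| else 0)
        (∑ k ∈ range N, if k < N then |e k| else 0) :=
      hasSum_sum_of_ne_finset_zero fun k hk => if_neg (by simpa using hk)
    rwa [sum_congr rfl fun k hk => if_pos (mem_range.1 hk)] at this
  have hmaj := hfin.add ((hbs z ⟨hz0, hz1⟩).hasSum.mul_left (c / 2))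
  have hB0 : 0 ≤ ∑' k, b k * z ^ k := tsum_nonneg fun k => by have := hb k; positivity
  calc ‖∑' k, e k * z ^ k‖ ≤ C + c / 2 * ∑' k, b k * z ^ k :=
        tsum_of_norm_bounded hmaj hbound
    _ ≤ c * ‖∑' k, b k * z ^ k‖ := by
        rw [Real.norm_of_nonneg hB0]
        rw [div_le_iff₀ hc] at hzB
        nlinarith

theorem tendsto_tsum_mul_pow_div_tsum {a b : ℕ → ℝ} {L : ℝ} (hb : ∀ k, 0 < b k)
    (hab : Tendsto (fun k => a k / b k) atTop (𝓝 L))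
    (hbs : ∀ z ∈ Set.Ioo (0 : ℝ) 1, Summable fun k => b k * z ^ k)
    (hB : Tendsto (fun z => ∑' k, b k * z ^ k) (𝓝[Set.Ioo 0 1] 1) atTop) :
    Tendsto (fun z => (∑' k, a k * z ^ k) / ∑' k, b k * z ^ k) (𝓝[Set.Ioo 0 1] 1)
      (𝓝 L) := by
  set e : ℕ → ℝ := fun k => a k - L * b k
  have heb : e =o[atTop] b := by
    refine (isLittleO_iff_tendsto fun k hk => absurd hk (hb k).ne').2 ?_
    have := hab.sub_const L
    rw [sub_self] at this
    refine this.congr fun k => ?_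
    simp only [e, sub_div, mul_div_cancel_right₀ _ (hb k).ne']
  have hes : ∀ z ∈ Set.Ioo (0 : ℝ) 1, Summable fun k => e k * z ^ k := by
    intro z hz
    refine (hbs z hz).of_norm_bounded_eventually_nat ?_
    filter_upwards [heb.bound one_pos] with k hk
    rw [one_mul, Real.norm_of_nonneg (hb k).le] at hk
    rw [norm_mul, norm_pow, Real.norm_of_nonneg hz.1.le]
    exact mul_le_mul_of_nonneg_right hk (pow_nonneg hz.1.le k)
  have hlim := (isLittleO_tsum_mul_pow (fun k => (hb k).le) heb hbs hB).tendsto_div_nhds_zero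
    |>.const_add L
  rw [add_zero] at hlim
  refine hlim.congr' ?_
  filter_upwards [hB.eventually_gt_atTop 0, self_mem_nhdsWithin] with z hzB hz
  have hsplit : ∑' k, a k * z ^ k = ∑' k, e k * z ^ k + L * ∑' k, b k * z ^ k := by
    rw [← tsum_mul_left, ← (hes z hz).tsum_add ((hbs z hz).mul_left L)]
    exact tsum_congr fun k => by ring
  rw [hsplit, add_div, mul_div_cancel_right₀ _ hzB.ne', add_comm]

theorem tendsto_one_div_one_sub_pow {n : ℕ} (hn : n ≠ 0) :
    Tendsto (fun z : ℝ => 1 / (1 - z) ^ n) (𝓝[Set.Ioo 0 1] 1) atTop := by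
  have hpow : Tendsto (fun z : ℝ => (1 - z) ^ n) (𝓝[Set.Ioo 0 1] 1) (𝓝[>] 0) := by
    refine tendsto_nhdsWithin_iff.2 ⟨?_, ?_⟩
    · have hcont : Continuous fun z : ℝ => (1 - z) ^ n := by fun_prop
      simpa [zero_pow hn] using (hcont.tendsto 1).mono_left nhdsWithin_le_nhds
    · filter_upwards [self_mem_nhdsWithin] with z hz
      exact pow_pos (sub_pos.2 hz.2) n
  simpa only [one_div, Function.comp_def] using tendsto_inv_nhdsGT_zero.comp hpow

theorem tendsto_add_natCast_mul_log_div (t : ℝ) :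
    Tendsto (fun k : ℕ => (t + k) * log ((t + k) / ((k : ℝ) + 1))) atTop (𝓝 (t - 1)) := by
  have hk : Tendsto (fun k : ℕ => (k : ℝ) + 1) atTop atTop :=
    tendsto_atTop_add_const_right _ 1 tendsto_natCast_atTop_atTop
  have hlog : Tendsto (fun k : ℕ => log (1 + (t - 1) / ((k : ℝ) + 1))) atTop (𝓝 0) := by
    have hone : Tendsto (fun k : ℕ => 1 + (t - 1) / ((k : ℝ) + 1)) atTop (𝓝 1) := by
      simpa using tendsto_const_nhds.add (tendsto_const_nhds.div_atTop hk)
    have := (continuousAt_log one_ne_zero).tendsto.comp hone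
    rwa [log_one] at this
  have := ((tendsto_mul_log_one_add_div_atTop (t - 1)).comp hk).add (hlog.const_mul (t - 1))
  rw [mul_zero, add_zero] at this
  refine this.congr fun k => ?_
  have hk0 : (k : ℝ) + 1 ≠ 0 := by positivity
  rw [Function.comp_apply, show (t + k) / ((k : ℝ) + 1) = 1 + (t - 1) / ((k : ℝ) + 1) by
    field_simp; ring]
  ring

theorem add_one_mul_choose_add_one_eq (d k : ℕ) (hd : 0 < d) :
    (k + 1) * (d + k).choose (k + 1) = (d + k) * (k + (d - 1)).choose (d - 1) := by
  obtain ⟨n, rfl⟩ := Nat.exists_eq_add_of_lt hd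
  have := Nat.add_one_mul_choose_eq (n + k) k
  rw [zero_add, Nat.add_sub_cancel, ← Nat.choose_symm_add, add_comm k n, add_right_comm, this,
    mul_comm]

-- `Q_G` and `Q_U` of the statement, i.e. the capacities measured in nats.
noncomputable def grassmannCapacity (d : ℕ) (z : ℝ) : ℝ :=
  (1 / (1 + z) ^ (d - 1)) *
    ∑ k ∈ range d, z ^ k * ((d - 1).choose k : ℝ) * log (((d : ℝ) - k) / ((k : ℝ) + 1))

noncomputable def unruhCapacity (d : ℕ) (z : ℝ) : ℝ :=
  ((1 - z) ^ (d + 1) / (d : ℝ)) *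
    ∑' k : ℕ, z ^ k * ((k : ℝ) + 1) * ((d + k).choose (k + 1) : ℝ) *
      log (((d : ℝ) + k) / ((k : ℝ) + 1))

theorem choose_mul_log_reflect (d k : ℕ) (hk : k < d) :
    ((d - 1).choose (d - 1 - k) : ℝ) *
        log (((d : ℝ) - (d - 1 - k : ℕ)) / ((d - 1 - k : ℕ) + 1)) =
      -(((d - 1).choose k : ℝ) * log (((d : ℝ) - k) / ((k : ℝ) + 1))) := by
  have hcast : ((d - 1 - k : ℕ) : ℝ) = d - 1 - k := by
    rw [Nat.cast_sub (by omega), Nat.cast_sub (by omega), Nat.cast_one]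
  rw [Nat.choose_symm (by omega), hcast, ← mul_neg, ← log_inv, inv_div]
  congr 3 <;> ring

theorem tendsto_grassmannCapacity_div_sub_one {d : ℕ} (hd : 0 < d) :
    Tendsto (fun z => grassmannCapacity d z / (z - 1)) (𝓝[≠] 1)
      (𝓝 (-(∑ k ∈ range ((d - 1) / 2 + 1), ((d : ℝ) - 1 - 2 * k) *
        ((d - 1).choose k : ℝ) * log (((d : ℝ) - k) / ((k : ℝ) + 1))) / 2 ^ (d - 1))) := by
  set c : ℕ → ℝ := fun k => ((d - 1).choose k : ℝ) * log (((d : ℝ) - k) / ((k : ℝ) + 1))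
  have hc : ∀ k < d, c (d - 1 - k) = -c k := fun k hk => choose_mul_log_reflect d k hk
  have hsum := tendsto_sum_pow_mul_div_sub_one (sum_range_eq_zero_of_reflect_eq_neg hc)
  rw [sum_range_natCast_mul_of_reflect_eq_neg hd hc] at hsum
  have hprefactor :
      Tendsto (fun z : ℝ => 1 / (1 + z) ^ (d - 1)) (𝓝[≠] 1) (𝓝 (1 / 2 ^ (d - 1))) := by
    have hcont : ContinuousAt (fun z : ℝ => 1 / (1 + z) ^ (d - 1)) 1 := by
      fun_prop (disch := positivity)
    simpa [one_add_one_eq_two] using hcont.tendsto.mono_left nhdsWithin_le_nhds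
  convert hprefactor.mul hsum using 1
  · ext z
    simp only [grassmannCapacity, c, mul_div_assoc, mul_assoc]
  · simp only [c, mul_assoc]
    congr 1
    ring

theorem tendsto_unruhCapacity_div_one_sub {d : ℕ} (hd : 0 < d) :
    Tendsto (fun z => unruhCapacity d z / (1 - z)) (𝓝[Set.Ioo 0 1] 1)
      (𝓝 (((d : ℝ) - 1) / d)) := by
  set a : ℕ → ℝ := fun k => ((k : ℝ) + 1) * ((d + k).choose (k + 1) : ℝ) *
    log (((d : ℝ) + k) / ((k : ℝ) + 1))
  set b : ℕ → ℝ := fun k => ((k + (d - 1)).choose (d - 1) : ℝ)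
  have hb : ∀ k, 0 < b k := fun k => Nat.cast_pos.2 (Nat.choose_pos (by omega))
  have hbsum : ∀ z ∈ Set.Ioo (0 : ℝ) 1, HasSum (fun k => b k * z ^ k) (1 / (1 - z) ^ d) := by
    intro z hz
    have := hasSum_choose_mul_geometric_of_norm_lt_one (d - 1) (r := z)
      (by rw [Real.norm_of_nonneg hz.1.le]; exact hz.2)
    rwa [Nat.sub_add_cancel hd] at this
  have hratio : Tendsto (fun k => a k / b k) atTop (𝓝 ((d : ℝ) - 1)) := by
    refine (tendsto_add_natCast_mul_log_div d).congr fun k => ?_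
    have hchoose : ((k : ℝ) + 1) * ((d + k).choose (k + 1) : ℝ) = ((d : ℝ) + k) * b k := by
      simp only [b]
      exact_mod_cast add_one_mul_choose_add_one_eq d k hd
    rw [eq_div_iff (hb k).ne']
    simp only [a, hchoose]
    ring
  have hB : Tendsto (fun z => ∑' k, b k * z ^ k) (𝓝[Set.Ioo 0 1] 1) atTop :=
    (tendsto_one_div_one_sub_pow hd.ne').congr'
      (eventually_nhdsWithin_of_forall fun z hz => (hbsum z hz).tsum_eq.symm)
  have hlim := tendsto_tsum_mul_pow_div_tsum hb hratio (fun z hz => (hbsum z hz).summable) hB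
  refine (hlim.div_const d).congr' (eventually_nhdsWithin_of_forall fun z hz => ?_)
  have h1 : (1 : ℝ) - z ≠ 0 := (sub_pos.2 hz.2).ne'
  have hseries : ∑' k, a k * z ^ k = ∑' k : ℕ, z ^ k * ((k : ℝ) + 1) *
      ((d + k).choose (k + 1) : ℝ) * log (((d : ℝ) + k) / ((k : ℝ) + 1)) :=
    tsum_congr fun k => by simp only [a]; ring
  simp only [unruhCapacity]
  rw [(hbsum z hz).tsum_eq, hseries]
  field_simp
  ring

/-- In the infinite acceleration limit `z → 1⁻`, the ratio of the quantum
capacities of the Grassmann channel and of the Unruh channel converges to the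
finite constant `r_d` (up to the common factor `1/ln d`). -/
theorem grassmann_unruh_capacity_ratio_limit
    (d : ℕ) (hd : 2 ≤ d) :
    Filter.Tendsto
      (fun z : ℝ =>
        ((1 / (1 + z) ^ (d - 1)) *
          ∑ k ∈ Finset.range d,
            z ^ k * ((d - 1).choose k : ℝ) *
              Real.log (((d : ℝ) - k) / ((k : ℝ) + 1))) /
        (((1 - z) ^ (d + 1) / (d : ℝ)) *
          ∑' k : ℕ, z ^ k * ((k : ℝ) + 1) * ((d + k).choose (k + 1) : ℝ) *
            Real.log (((d : ℝ) + k) / ((k : ℝ) + 1))))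
      (nhdsWithin 1 (Set.Ioo (0 : ℝ) 1))
      (nhds (((d : ℝ) / ((d : ℝ) - 1)) * (1 / 2 ^ (d - 1)) *
        ∑ k ∈ Finset.range ((d - 1) / 2 + 1),
          ((d : ℝ) - 1 - 2 * k) * ((d - 1).choose k : ℝ) *
            Real.log (((d : ℝ) - k) / ((k : ℝ) + 1)))) := by
  change Tendsto (fun z => grassmannCapacity d z / unruhCapacity d z) _ _
  have hG := (tendsto_grassmannCapacity_div_sub_one (d := d) (by omega)).mono_left
    (nhdsWithin_mono _ fun z (hz : z ∈ Set.Ioo (0 : ℝ) 1) => hz.2.ne)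
  have hd1 : (0 : ℝ) < d - 1 := by
    rw [sub_pos]
    exact_mod_cast hd
  have hlim := hG.neg.div (tendsto_unruhCapacity_div_one_sub (d := d) (by omega)) (by positivity)
  convert hlim.congr' (eventually_nhdsWithin_of_forall fun z hz => ?_) using 2
  · field_simp
  · have h1 : (1 : ℝ) - z ≠ 0 := (sub_pos.2 hz.2).ne'
    rw [Pi.div_apply, ← div_neg, neg_sub, div_div_div_cancel_right₀ h1]
end

section
/- Let d ≥ 2 be a natural number. Define, for real z with 0 < z < 1, Q_G(z) = (1/(1+z)^(d−1)) · ∑_{k=0}^{d−1} z^k · C(d−1, k) · ln((d−k)/(k+1)) and Q_U(z) = ((1−z)^(d+1)/d) · ∑_{k=1}^{∞} z^(k−1) · k · C(d+k−1, k) · ln((d+k−1)/k). Then both Q_G(z) and Q_U(z) tend to 0 as z tends to 1 from the left. -/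
open Real Finset Filter

private lemma grassmann_sum_zero (d : ℕ) (hd : 2 ≤ d) :
    ∑ k ∈ Finset.range d, ((d - 1).choose k : ℝ) *
      Real.log (((d : ℝ) - k) / ((k : ℝ) + 1)) = 0 := by
  set g : ℕ → ℝ := fun k => ((d - 1).choose k : ℝ) *
    Real.log (((d : ℝ) - k) / ((k : ℝ) + 1)) with hg
  have key : ∀ k ∈ Finset.range d, g (d - 1 - k) = - g k := by
    intro k hk
    simp only [Finset.mem_range] at hk
    have hk1 : k ≤ d - 1 := by omega
    have hc : ((d - 1 - k : ℕ) : ℝ) = (d : ℝ) - 1 - k := by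
      have h1 : (1 : ℕ) ≤ d := by omega
      push_cast [Nat.cast_sub hk1, Nat.cast_sub h1]
      ring
    have hch : (d - 1).choose (d - 1 - k) = (d - 1).choose k := Nat.choose_symm hk1
    have harg : ((d : ℝ) - ((d - 1 - k : ℕ) : ℝ)) / (((d - 1 - k : ℕ) : ℝ) + 1)
        = (((k : ℝ) + 1) / ((d : ℝ) - k)) := by
      rw [hc]; ring_nf
    simp only [hg, hch, harg]
    rw [show ((k : ℝ) + 1) / ((d : ℝ) - k) = (((d : ℝ) - k) / ((k : ℝ) + 1))⁻¹ by
      rw [inv_div], Real.log_inv]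
    ring
  have hrefl : ∑ k ∈ Finset.range d, g (d - 1 - k) = ∑ k ∈ Finset.range d, g k :=
    Finset.sum_range_reflect g d
  have hneg : ∑ k ∈ Finset.range d, g (d - 1 - k) = - ∑ k ∈ Finset.range d, g k := by
    rw [Finset.sum_congr rfl key, Finset.sum_neg_distrib]
  have := hrefl.symm.trans hneg
  linarith

/-- Both the Grassmann (fermionic) and the Unruh (bosonic) channel quantum
capacities tend to zero in the infinite acceleration limit `z → 1⁻`. -/
theorem grassmann_unruh_capacities_vanish
    (d : ℕ) (hd : 2 ≤ d) :
    Filter.Tendsto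
      (fun z : ℝ =>
        (1 / (1 + z) ^ (d - 1)) *
          ∑ k ∈ Finset.range d,
            z ^ k * ((d - 1).choose k : ℝ) *
              Real.log (((d : ℝ) - k) / ((k : ℝ) + 1)))
      (nhdsWithin 1 (Set.Ioo (0 : ℝ) 1)) (nhds 0) ∧
    Filter.Tendsto
      (fun z : ℝ =>
        ((1 - z) ^ (d + 1) / (d : ℝ)) *
          ∑' k : ℕ, z ^ k * ((k : ℝ) + 1) * ((d + k).choose (k + 1) : ℝ) *
            Real.log (((d : ℝ) + k) / ((k : ℝ) + 1)))
      (nhdsWithin 1 (Set.Ioo (0 : ℝ) 1)) (nhds 0) := by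
  constructor
  · -- Grassmann part
    set f : ℝ → ℝ := fun z =>
      (1 / (1 + z) ^ (d - 1)) *
        ∑ k ∈ Finset.range d,
          z ^ k * ((d - 1).choose k : ℝ) *
            Real.log (((d : ℝ) - k) / ((k : ℝ) + 1)) with hf
    have hcont : ContinuousAt f 1 := by
      apply ContinuousAt.mul
      · apply ContinuousAt.div continuousAt_const
        · exact ((continuous_const.add continuous_id).pow _).continuousAt
        · norm_num
      · exact (continuous_finset_sum _ fun k _ =>
          ((continuous_pow k).mul continuous_const).mul continuous_const).continuousAt
    have hval : f 1 = 0 := by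
      simp only [hf, one_pow, one_mul]
      rw [grassmann_sum_zero d hd, mul_zero]
    have := hcont.continuousWithinAt (s := Set.Ioo (0:ℝ) 1)
    rw [ContinuousWithinAt, hval] at this
    exact this
  · -- Unruh part
    set F : ℝ → ℝ := fun z =>
      ((1 - z) ^ (d + 1) / (d : ℝ)) *
        ∑' k : ℕ, z ^ k * ((k : ℝ) + 1) * ((d + k).choose (k + 1) : ℝ) *
          Real.log (((d : ℝ) + k) / ((k : ℝ) + 1)) with hF
    have hdR : (0 : ℝ) < d := by positivity
    -- pointwise bounds on Ioo 0 1
    have key : ∀ z ∈ Set.Ioo (0:ℝ) 1,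
        0 ≤ F z ∧ F z ≤ (((d : ℝ) - 1) / d) * ((1 - z) / z) := by
      intro z hz
      obtain ⟨hz0, hz1⟩ := hz
      have h1z : (0:ℝ) < 1 - z := by linarith
      have hznorm : ‖z‖ < 1 := by rw [Real.norm_eq_abs, abs_of_pos hz0]; exact hz1
      set a : ℕ → ℝ := fun k => z ^ k * ((k : ℝ) + 1) * ((d + k).choose (k + 1) : ℝ) *
        Real.log (((d : ℝ) + k) / ((k : ℝ) + 1)) with ha
      set b : ℕ → ℝ := fun n => ((n + (d - 1)).choose (d - 1) : ℝ) * z ^ n with hb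
      have hb_sum : Summable b := summable_choose_mul_geometric_of_norm_lt_one (d - 1) hznorm
      have hb_tsum : ∑' n, b n = 1 / (1 - z) ^ d := by
        have h := tsum_choose_mul_geometric_of_norm_lt_one (d - 1) (r := z) hznorm
        rw [show d - 1 + 1 = d by omega] at h
        exact h
      have hb_nonneg : ∀ n, 0 ≤ b n := fun n => by positivity
      set c : ℕ → ℝ := fun k => ((d : ℝ) - 1) * (((d + k).choose (k + 1) : ℝ) * z ^ k) with hc
      have hcb : ∀ k, c k = (((d : ℝ) - 1) / z) * b (k + 1) := by
        intro k
        have hch : (d + k).choose (k + 1) = (k + 1 + (d - 1)).choose (d - 1) := by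
          rw [show k + 1 + (d - 1) = d + k by omega]
          rw [← Nat.choose_symm (by omega : k + 1 ≤ d + k)]
          congr 1
          omega
        simp only [hc, hb, hch]
        field_simp
        ring
      have ha_nonneg : ∀ k, 0 ≤ a k := by
        intro k
        have hlog : 0 ≤ Real.log (((d : ℝ) + k) / ((k : ℝ) + 1)) := by
          apply Real.log_nonneg
          rw [le_div_iff₀ (by positivity)]
          have : (1:ℝ) ≤ d := by exact_mod_cast Nat.one_le_of_lt hd
          linarith
        positivity
      have hac : ∀ k, a k ≤ c k := by
        intro k
        have hpos : (0:ℝ) < ((d : ℝ) + k) / ((k : ℝ) + 1) := by positivity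
        have hlog : Real.log (((d : ℝ) + k) / ((k : ℝ) + 1)) ≤
            ((d : ℝ) - 1) / ((k : ℝ) + 1) := by
          calc Real.log (((d : ℝ) + k) / ((k : ℝ) + 1))
              ≤ ((d : ℝ) + k) / ((k : ℝ) + 1) - 1 := Real.log_le_sub_one_of_pos hpos
            _ = ((d : ℝ) - 1) / ((k : ℝ) + 1) := by field_simp; ring
        have h1 : ((k : ℝ) + 1) * Real.log (((d : ℝ) + k) / ((k : ℝ) + 1)) ≤ (d : ℝ) - 1 := by
          have := mul_le_mul_of_nonneg_left hlog (by positivity : (0:ℝ) ≤ (k:ℝ) + 1)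
          rwa [mul_div_cancel₀ _ (by positivity : ((k : ℝ) + 1) ≠ 0)] at this
        have hznn : (0:ℝ) ≤ z ^ k * ((d + k).choose (k + 1) : ℝ) := by positivity
        calc a k = (z ^ k * ((d + k).choose (k + 1) : ℝ)) *
              (((k : ℝ) + 1) * Real.log (((d : ℝ) + k) / ((k : ℝ) + 1))) := by
              simp only [ha]; ring
          _ ≤ (z ^ k * ((d + k).choose (k + 1) : ℝ)) * ((d : ℝ) - 1) :=
              mul_le_mul_of_nonneg_left h1 hznn
          _ = c k := by simp only [hc]; ring
      have hc_sum : Summable c := by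
        have : Summable (fun k => b (k + 1)) := (summable_nat_add_iff 1).2 hb_sum
        have := this.mul_left (((d : ℝ) - 1) / z)
        exact this.congr fun k => (hcb k).symm
      have ha_sum : Summable a := Summable.of_nonneg_of_le ha_nonneg hac hc_sum
      have htsum_le : ∑' k, a k ≤ (((d : ℝ) - 1) / z) * (1 / (1 - z) ^ d) := by
        calc ∑' k, a k ≤ ∑' k, c k := Summable.tsum_le_tsum hac ha_sum hc_sum
          _ = (((d : ℝ) - 1) / z) * ∑' k, b (k + 1) := by
              rw [← tsum_mul_left]; exact tsum_congr hcb
          _ ≤ (((d : ℝ) - 1) / z) * ∑' n, b n := by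
              have h1d : (1:ℝ) ≤ d := by exact_mod_cast Nat.one_le_of_lt hd
              apply mul_le_mul_of_nonneg_left _ (div_nonneg (by linarith) hz0.le)
              have h0 : ∑' n, b n = b 0 + ∑' k, b (k + 1) := Summable.tsum_eq_zero_add hb_sum
              have := hb_nonneg 0
              linarith
          _ = (((d : ℝ) - 1) / z) * (1 / (1 - z) ^ d) := by rw [hb_tsum]
      have htsum_nonneg : 0 ≤ ∑' k, a k := tsum_nonneg ha_nonneg
      constructor
      · apply mul_nonneg (by positivity) htsum_nonneg
      · have hcoef : (0:ℝ) ≤ (1 - z) ^ (d + 1) / (d : ℝ) := by positivity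
        calc F z ≤ ((1 - z) ^ (d + 1) / (d : ℝ)) *
              ((((d : ℝ) - 1) / z) * (1 / (1 - z) ^ d)) :=
              mul_le_mul_of_nonneg_left htsum_le hcoef
          _ = (((d : ℝ) - 1) / d) * ((1 - z) / z) := by
              rw [pow_succ]
              field_simp
    -- the squeeze
    have hlim : Tendsto (fun z : ℝ => (((d : ℝ) - 1) / d) * ((1 - z) / z))
        (nhdsWithin 1 (Set.Ioo (0:ℝ) 1)) (nhds 0) := by
      have hcont : ContinuousAt (fun z : ℝ => (((d : ℝ) - 1) / d) * ((1 - z) / z)) 1 := by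
        apply ContinuousAt.mul continuousAt_const
        exact ContinuousAt.div (continuous_const.sub continuous_id).continuousAt
          continuous_id.continuousAt one_ne_zero
      have := hcont.continuousWithinAt (s := Set.Ioo (0:ℝ) 1)
      rw [ContinuousWithinAt] at this
      simpa using this
    apply squeeze_zero'
    · filter_upwards [self_mem_nhdsWithin] with z hz using (key z hz).1
    · filter_upwards [self_mem_nhdsWithin] with z hz using (key z hz).2
    · exact hlim
end
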